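/- Let K be a commutative semiring and let G be a complete ordered nondeterministic edge-valued decision diagram over K on variables x_1 ≺ ⋯ ≺ x_n representing the function f : {0,1}^n → K. Then there exists a tensor train on n Boolean variables over K representing f whose bond dimension χ_r, for each r ∈ {1,…,n}, equals the number of nodes of G labeled x_r (and χ_{n+1} = 1); concretely, enumerating the nodes labeled x_r as v^{(r)}_1,…,v^{(r)}_{χ_r}, the tensor entries are A(r)[s,t,b] = w(e) if there is a b-edge e from v^{(r)}_s to v^{(r+1)}_t and A(r)[s,t,b] = 0 otherwise. -/

import Mathlib

/-! ## Tensor trains -/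

/-- `ttSuffix n χ A α k s` is the `(s,0)` entry of the matrix product
`M_{n-k}(α (n-k)) ⋯ M_{n-1}(α (n-1))` of the last `k` matrices of the tensor train
(0-indexed variables `0,…,n-1`, bond dimensions `χ 0, …, χ n`). -/
def ttSuffix {K : Type} [CommSemiring K] (n : ℕ) (χ : ℕ → ℕ)
    (A : ℕ → ℕ → ℕ → Bool → K) (α : ℕ → Bool) : ℕ → ℕ → K
  | 0, s => if s = 0 then 1 else 0
  | k + 1, s =>
      ∑ t ∈ Finset.range (χ (n - k)),
        A (n - (k + 1)) s t (α (n - (k + 1))) * ttSuffix n χ A α k t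

/-- The pseudo-Boolean function represented by a tensor train: the unique entry of
`M_0(α 0) ⋯ M_{n-1}(α (n-1))`. -/
def ttFun {K : Type} [CommSemiring K] (n : ℕ) (χ : ℕ → ℕ)
    (A : ℕ → ℕ → ℕ → Bool → K) (α : ℕ → Bool) : K :=
  ttSuffix n χ A α n 0

/-! ## Nondeterministic edge-valued decision diagrams -/

/-- An ordered nondeterministic edge-valued decision diagram over `K` on the (0-indexed)
variables `x_0 ≺ ⋯ ≺ x_{n-1}`.  Nodes carry a `level`: a node of level `r < n` is labeled with
the variable `x_r`; the sink is the unique node of level `n` and is unlabeled.  Levels strictly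
increase along edges (so the diagram is an ordered, read-once DAG), the source is the unique
node without incoming edges and the sink the unique node without outgoing edges.  Each edge
carries a Boolean label and a weight in `K`. -/
structure NdEVDD (K : Type) (n : ℕ) where
  V : Type
  [fintypeV : Fintype V]
  [decEqV : DecidableEq V]
  source : V
  sink : V
  level : V → ℕ
  edge : V → Bool → V → Bool
  w : V → Bool → V → K
  sink_level : level sink = n
  nonsink_level : ∀ v, v ≠ sink → level v < n
  edge_level : ∀ u b v, edge u b v = true → level u < level v
  source_no_in : ∀ u b, edge u b source = false
  sink_no_out : ∀ b v, edge sink b v = false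
  single_source : ∀ v, v ≠ source → ∃ u b, edge u b v = true
  single_sink : ∀ v, v ≠ sink → ∃ b u, edge v b u = true

attribute [instance] NdEVDD.fintypeV NdEVDD.decEqV

namespace NdEVDD

variable {K : Type} {n : ℕ}

/-- `D.IsPathFrom α v p`: `p` is a path from `v` to the sink that leaves every node labeled
`x_i` along an edge labeled `α i`. -/
def IsPathFrom (D : NdEVDD K n) (α : ℕ → Bool) : D.V → List (Bool × D.V) → Prop
  | v, [] => v = D.sink
  | v, (b, u) :: p => D.edge v b u = true ∧ b = α (D.level v) ∧ IsPathFrom D α u p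

/-- The product of the weights of the edges of a path. -/
def pathWeight [CommSemiring K] (D : NdEVDD K n) : D.V → List (Bool × D.V) → K
  | _, [] => 1
  | v, (b, u) :: p => D.w v b u * pathWeight D u p

/-- The function represented by the node `v` of the diagram: the sum, over all paths from `v`
to the sink consistent with the assignment `α`, of the product of the edge weights
(`0` if there is no such path). -/
noncomputable def nodeFun [CommSemiring K] (D : NdEVDD K n) (α : ℕ → Bool) (v : D.V) : K :=
  ∑ᶠ (p : List (Bool × D.V)) (_ : D.IsPathFrom α v p), D.pathWeight v p

/-- The function represented by the diagram: the path-sum from the source. -/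
noncomputable def eval [CommSemiring K] (D : NdEVDD K n) (α : ℕ → Bool) : K :=
  D.nodeFun α D.source

/-- A diagram is complete when every source-to-sink path reads every variable; with levels
this means the source is at level `0` and every edge advances the level by exactly one. -/
def Complete (D : NdEVDD K n) : Prop :=
  D.level D.source = 0 ∧ ∀ u b v, D.edge u b v = true → D.level v = D.level u + 1

/-- A diagram is deterministic when every node has at most one outgoing `0`-edge and at most
one outgoing `1`-edge. -/
def Deterministic (D : NdEVDD K n) : Prop :=
  ∀ u b v₁ v₂, D.edge u b v₁ = true → D.edge u b v₂ = true → v₁ = v₂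

/-- The number of edges of the diagram. -/
def edgeCount (D : NdEVDD K n) : ℕ :=
  (Finset.univ.filter fun t : D.V × Bool × D.V => D.edge t.1 t.2.1 t.2.2 = true).card

end NdEVDD
/-! ## Vtrees -/

/-- A vtree: a rooted binary tree whose leaves are labeled with (distinct) variables. -/
inductive VTree : Type
  | leaf (x : ℕ)
  | node (l r : VTree)

namespace VTree

/-- The set of variables on the leaves of a vtree. -/
def vars : VTree → Set ℕ
  | .leaf x => {x}
  | .node l r => l.vars ∪ r.vars

/-- The list of leaf labels, read from left to right. -/
def leaves : VTree → List ℕ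
  | .leaf x => [x]
  | .node l r => l.leaves ++ r.leaves

/-- `s.Subtree t` : `s` is a (not necessarily proper) subtree of `t`. -/
def Subtree (s : VTree) : VTree → Prop
  | .leaf x => s = .leaf x
  | .node l r => s = .node l r ∨ s.Subtree l ∨ s.Subtree r

end VTree

/-! ## (+,×)-circuits -/

/-- The kind of a circuit gate: an input `1[x = b]`, a `+` gate, or a `×` gate. -/
inductive GateKind : Type
  | input (x : ℕ) (b : Bool)
  | plus
  | times
deriving DecidableEq

/-- A `(+,×)`-circuit over a (commutative) semiring `K`: a finite DAG (acyclicity is witnessed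
by a rank function decreasing from a gate to its children) whose sources are labeled with
indicator inputs `1[x = b]`, whose internal gates are `+` or `×` gates, and where each edge
from a child into a `+` gate carries a weight (recorded by `weight g g'` for the edge from
`g'` into `g`). -/
structure Circuit (K : Type) where
  Gate : Type
  [fintypeGate : Fintype Gate]
  [decEqGate : DecidableEq Gate]
  kind : Gate → GateKind
  child : Gate → Gate → Bool
  weight : Gate → Gate → K
  rank : Gate → ℕ
  child_rank : ∀ g g', child g g' = true → rank g' < rank g
  input_no_child : ∀ g x b, kind g = .input x b → ∀ g', child g g' = false

attribute [instance] Circuit.fintypeGate Circuit.decEqGate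

namespace Circuit

variable {K : Type}

/-- The value computed by gate `g` on the assignment `α` : inputs `1[x = b]` evaluate to `1`
iff `α x = b`, a `+` gate computes the weighted sum of its children, and a `×` gate computes
the product of its children. -/
def eval [CommSemiring K] (C : Circuit K) (α : ℕ → Bool) (g : C.Gate) : K :=
  match C.kind g with
  | GateKind.input x b => if α x = b then 1 else 0
  | GateKind.plus =>
      ∑ g' : C.Gate, if h : C.child g g' = true then C.weight g g' * C.eval α g' else 0
  | GateKind.times =>
      ∏ g' : C.Gate, if h : C.child g g' = true then C.eval α g' else 1
termination_by C.rank g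
decreasing_by
  all_goals exact C.child_rank g g' h

/-- Reachability along child edges. -/
def Reaches (C : Circuit K) : C.Gate → C.Gate → Prop :=
  Relation.ReflTransGen fun a b => C.child a b = true

/-- `var(g)`: the set of variables appearing on inputs below `g`. -/
def varsBelow (C : Circuit K) (g : C.Gate) : Set ℕ :=
  {x | ∃ g' b, C.Reaches g g' ∧ C.kind g' = GateKind.input x b}

/-- A structuring of the circuit `C` by the vtree `T`: a map `φ` from gates to (subtrees of)
`T` such that `var(g) ⊆ var(φ g)`, every `×` gate has exactly two children mapped into the
left and right subtrees of `φ g` respectively, and every `+` gate has its children mapped to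
`φ g` or its descendants.  A circuit admitting such a structuring is
structured-decomposable. -/
structure StructuredBy (C : Circuit K) (T : VTree) where
  φ : C.Gate → VTree
  φ_subtree : ∀ g, (φ g).Subtree T
  φ_vars : ∀ g, C.varsBelow g ⊆ (φ g).vars
  plus_structured : ∀ g g', C.kind g = GateKind.plus → C.child g g' = true →
    (φ g').Subtree (φ g)
  times_structured : ∀ g, C.kind g = GateKind.times →
    ∃ l r gl gr, φ g = VTree.node l r ∧ gl ≠ gr ∧
      (∀ g', C.child g g' = true ↔ (g' = gl ∨ g' = gr)) ∧
      (φ gl).Subtree l ∧ (φ gr).Subtree r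

/-- A circuit is deterministic when for every `+` gate and every two distinct children the
product of the corresponding weighted summands is the zero function. -/
def Deterministic [CommSemiring K] (C : Circuit K) : Prop :=
  ∀ g g₁ g₂, C.kind g = GateKind.plus → C.child g g₁ = true → C.child g g₂ = true →
    g₁ ≠ g₂ → ∀ α, (C.weight g g₁ * C.eval α g₁) * (C.weight g g₂ * C.eval α g₂) = 0

/-- A structured-decomposable circuit is a decision circuit when every `+` gate has the form
`g₀·1[x = 0] + g₁·1[x = 1]` for some variable `x`: its children are exactly two `×` gates,
one having the input `1[x = 0]` as one of its two children and the other having the input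
`1[x = 1]` as one of its two children. -/
def Decision (C : Circuit K) : Prop :=
  ∀ g, C.kind g = GateKind.plus →
    ∃ x m₀ m₁ g₀ g₁ i₀ i₁,
      m₀ ≠ m₁ ∧
      (∀ g', C.child g g' = true ↔ (g' = m₀ ∨ g' = m₁)) ∧
      C.kind m₀ = GateKind.times ∧ C.kind m₁ = GateKind.times ∧
      C.kind i₀ = GateKind.input x false ∧ C.kind i₁ = GateKind.input x true ∧
      g₀ ≠ i₀ ∧ g₁ ≠ i₁ ∧
      (∀ c, C.child m₀ c = true ↔ (c = g₀ ∨ c = i₀)) ∧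
      (∀ c, C.child m₁ c = true ↔ (c = g₁ ∨ c = i₁))

end Circuit

/-! ## Tree tensor networks -/

/-- A (binary) tree tensor network over `K`, indexed by the dimension `d` of its root:
a leaf labeled with the variable `x` carries a `2 × d` tensor, and an internal node with
children of dimensions `dl` and `dr` carries a `dl × dr × d` tensor. -/
inductive TTN (K : Type) : ℕ → Type
  | leaf (x : ℕ) {d : ℕ} (A : Bool → Fin d → K) : TTN K d
  | node {dl dr d : ℕ} (l : TTN K dl) (r : TTN K dr)
      (A : Fin dl → Fin dr → Fin d → K) : TTN K d

namespace TTN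

variable {K : Type}

/-- The `d` pseudo-Boolean functions `Â(v)[·,k]` represented by a TTN, evaluated on a (total)
assignment `α` of the Boolean variables. -/
def eval [CommSemiring K] : ∀ {d : ℕ}, TTN K d → (ℕ → Bool) → Fin d → K
  | _, .leaf x A, α, k => A (α x) k
  | _, @TTN.node _ dl dr _ l r A, α, k =>
      ∑ i : Fin dl, ∑ j : Fin dr, A i j k * (eval l α i * eval r α j)

/-- The underlying vtree (tree shape with leaf labels) of a TTN. -/
def shape : ∀ {d : ℕ}, TTN K d → VTree
  | _, .leaf x _ => VTree.leaf x
  | _, .node l r _ => VTree.node l.shape r.shape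

/-- `TTN.Sub u t` : the node `u` is a (not necessarily proper) subtree of the TTN `t`. -/
inductive Sub : ∀ {d₁ d₂ : ℕ}, TTN K d₁ → TTN K d₂ → Prop
  | refl {d} (t : TTN K d) : Sub t t
  | left {d₀ dl dr d} (s : TTN K d₀) (l : TTN K dl) (r : TTN K dr)
      (A : Fin dl → Fin dr → Fin d → K) : Sub s l → Sub s (TTN.node l r A)
  | right {d₀ dl dr d} (s : TTN K d₀) (l : TTN K dl) (r : TTN K dr)
      (A : Fin dl → Fin dr → Fin d → K) : Sub s r → Sub s (TTN.node l r A)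

/-- A TTN is deterministic when at every internal node `v`, for every `k` and every two
distinct nonzero entries `A(v)[i₁,j₁,k]`, `A(v)[i₂,j₂,k]`, the entrywise product of the
`i₁`-th and `i₂`-th represented functions of the left child vanishes, or that of the
`j₁`-th and `j₂`-th represented functions of the right child vanishes. -/
def Deterministic [CommSemiring K] : ∀ {d : ℕ}, TTN K d → Prop
  | _, .leaf _ _ => True
  | _, @TTN.node _ dl dr d l r A =>
      Deterministic l ∧ Deterministic r ∧
      ∀ (k : Fin d) (i₁ i₂ : Fin dl) (j₁ j₂ : Fin dr),
        (i₁, j₁) ≠ (i₂, j₂) → A i₁ j₁ k ≠ 0 → A i₂ j₂ k ≠ 0 →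
        (∀ α, eval l α i₁ * eval l α i₂ = 0) ∨ (∀ α, eval r α j₁ * eval r α j₂ = 0)

/-- The local condition of a decision TTN at an internal node with children `l`, `r` and
tensor `A` (following the case distinction on which children are leaves). -/
def DecisionNodeCond [CommSemiring K] :
    ∀ {dl dr d : ℕ}, TTN K dl → TTN K dr → (Fin dl → Fin dr → Fin d → K) → Prop
  | _, _, _, .leaf _ _, .leaf _ _, _ => True
  | _, _, _, .node _ _ _, .node _ _ _, A =>
      ∀ k i₁ j₁ i₂ j₂, A i₁ j₁ k ≠ 0 → A i₂ j₂ k ≠ 0 → (i₁, j₁) = (i₂, j₂)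
  | _, _, _, .node _ _ _, .leaf _ Ar, A =>
      ∀ k, ∃ j₀ k₀ j₁ k₁, ∀ i j, A i j k ≠ 0 →
        ((i, j) = (j₀, k₀) ∧ Ar true k₀ = 0) ∨ ((i, j) = (j₁, k₁) ∧ Ar false k₁ = 0)
  | _, _, _, .leaf _ Al, .node _ _ _, A =>
      ∀ k, ∃ j₀ k₀ j₁ k₁, ∀ i j, A i j k ≠ 0 →
        ((i, j) = (k₀, j₀) ∧ Al true k₀ = 0) ∨ ((i, j) = (k₁, j₁) ∧ Al false k₁ = 0)

/-- A decision TTN: at every leaf each column of the tensor has a zero in the `x = 0` row or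
in the `x = 1` row; at every internal node both of whose children are internal every slice
`A(v)[·,·,k]` has at most one nonzero entry; and at every internal node with exactly one leaf
child every slice has at most two nonzero entries whose leaf-side columns vanish at `x = 1`
and at `x = 0` respectively. -/
def Decision [CommSemiring K] : ∀ {d : ℕ}, TTN K d → Prop
  | _, .leaf _ A => ∀ i, A false i = 0 ∨ A true i = 0
  | _, .node l r A => Decision l ∧ Decision r ∧ DecisionNodeCond l r A

end TTN

/-
In a complete diagram every edge joins consecutive levels. Splitting each path-sum at its first
edge shows that the vector of node values at level `r` is `M_r(α r)` applied to the vector at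
level `r + 1`, where `M_r(b)` is the weighted `b`-adjacency matrix between the two levels. The sink
alone forms level `n` and has value `1`, the source alone forms level `0`, so unrolling this
backward recursion is exactly evaluating the tensor-train product.
-/

section BackwardRecursion

variable {K : Type} [CommSemiring K] {n : ℕ} {χ : ℕ → ℕ} {A : ℕ → ℕ → ℕ → Bool → K}
  {α : ℕ → Bool} (g : ∀ r, Fin (χ r) → K) (hχ : χ n = 1) (hlast : ∀ s, g n s = 1)
  (hstep : ∀ r < n, ∀ s, g r s = ∑ t : Fin (χ (r + 1)), A r s t (α r) * g (r + 1) t)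
include hχ hlast hstep

theorem ttSuffix_eq_of_backward_recursion :
    ∀ {k r : ℕ}, r + k = n → ∀ s : Fin (χ r), ttSuffix n χ A α k s = g r s := by
  intro k
  induction k with
  | zero =>
    intro r hr s
    rw [Nat.add_zero] at hr
    subst hr
    have hs : (s : ℕ) = 0 := by have := s.2; omega
    rw [ttSuffix, if_pos hs, hlast]
  | succ k ih =>
    intro r hr s
    rw [ttSuffix, show n - k = r + 1 by omega, show n - (k + 1) = r by omega, Finset.sum_range,
      hstep r (by omega) s]
    exact Finset.sum_congr rfl fun t _ => by rw [ih (by omega) t]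

theorem ttFun_eq_of_backward_recursion (hχ0 : 0 < χ 0) : ttFun n χ A α = g 0 ⟨0, hχ0⟩ :=
  ttSuffix_eq_of_backward_recursion g hχ hlast hstep (zero_add n) ⟨0, hχ0⟩

end BackwardRecursion

namespace NdEVDD

variable {K : Type} {n : ℕ} (D : NdEVDD K n)

lemma eq_source_of_level_eq_zero {v : D.V} (hv : D.level v = 0) : v = D.source := by
  by_contra h
  obtain ⟨u, b, he⟩ := D.single_source v h
  have := D.edge_level u b v he
  omega

lemma eq_sink_of_level_eq {v : D.V} (hv : D.level v = n) : v = D.sink := by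
  by_contra h
  exact (D.nonsink_level v h).ne hv

lemma length_add_level_le_of_isPathFrom (α : ℕ → Bool) :
    ∀ {v : D.V} {p : List (Bool × D.V)}, D.IsPathFrom α v p → p.length + D.level v ≤ n
  | _, [], rfl => by rw [D.sink_level, List.length_nil, zero_add]
  | v, (b, _) :: _, ⟨he, _, hp⟩ => by
    have := length_add_level_le_of_isPathFrom α hp
    have := D.edge_level v b _ he
    rw [List.length_cons]
    omega

lemma finite_setOf_isPathFrom (α : ℕ → Bool) (v : D.V) : {p | D.IsPathFrom α v p}.Finite :=
  (List.finite_length_le (Bool × D.V) n).subset fun _ hp => by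
    have := D.length_add_level_le_of_isPathFrom α hp
    exact (Nat.le_add_right _ _).trans this

lemma setOf_isPathFrom_sink (α : ℕ → Bool) : {p | D.IsPathFrom α D.sink p} = {[]} := by
  ext (_ | ⟨⟨b, u⟩, p⟩)
  · simp [IsPathFrom]
  · simp [IsPathFrom, D.sink_no_out]

lemma setOf_isPathFrom_of_ne_sink (α : ℕ → Bool) {v : D.V} (hv : v ≠ D.sink) :
    {p | D.IsPathFrom α v p} = ⋃ u ∈ {u | D.edge v (α (D.level v)) u = true},
      List.cons (α (D.level v), u) '' {p | D.IsPathFrom α u p} := by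
  ext (_ | ⟨⟨b, u⟩, p⟩)
  · simp [IsPathFrom, hv]
  · simp only [IsPathFrom, Set.mem_ofPred_eq, Set.mem_iUnion, Set.mem_image, List.cons.injEq,
      Prod.mk.injEq, exists_prop]
    constructor
    · rintro ⟨he, rfl, hp⟩
      exact ⟨u, he, p, hp, ⟨rfl, rfl⟩, rfl⟩
    · rintro ⟨u, he, p, hp, ⟨rfl, rfl⟩, rfl⟩
      exact ⟨he, rfl, hp⟩

noncomputable def levelCard (r : ℕ) : ℕ :=
  Fintype.card {v : D.V // D.level v = r}

noncomputable def levelEquiv (r : ℕ) : Fin (D.levelCard r) ≃ {v : D.V // D.level v = r} :=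
  (Fintype.equivFin _).symm

lemma levelCard_zero (hD : D.Complete) : D.levelCard 0 = 1 :=
  Fintype.card_eq_one_iff.mpr
    ⟨⟨D.source, hD.1⟩, fun v => Subtype.ext (D.eq_source_of_level_eq_zero v.2)⟩

lemma levelCard_last : D.levelCard n = 1 :=
  Fintype.card_eq_one_iff.mpr
    ⟨⟨D.sink, D.sink_level⟩, fun v => Subtype.ext (D.eq_sink_of_level_eq v.2)⟩

section Zero

variable [Zero K]

def edgeWeight (v : D.V) (b : Bool) (u : D.V) : K :=
  if D.edge v b u = true then D.w v b u else 0

lemma edgeWeight_eq_zero_of_level_ne (hD : D.Complete) {v u : D.V} (b : Bool)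
    (h : D.level u ≠ D.level v + 1) : D.edgeWeight v b u = 0 :=
  if_neg fun he => h (hD.2 v b u he)

noncomputable def ttCore (r s t : ℕ) (b : Bool) : K :=
  if h : s < D.levelCard r ∧ t < D.levelCard (r + 1) then
    D.edgeWeight (D.levelEquiv r ⟨s, h.1⟩) b (D.levelEquiv (r + 1) ⟨t, h.2⟩)
  else 0

lemma ttCore_apply {r : ℕ} (s : Fin (D.levelCard r)) (t : Fin (D.levelCard (r + 1))) (b : Bool) :
    D.ttCore r s t b = D.edgeWeight (D.levelEquiv r s) b (D.levelEquiv (r + 1) t) :=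
  dif_pos ⟨s.2, t.2⟩

end Zero

section CommSemiring

variable [CommSemiring K]

lemma nodeFun_sink (α : ℕ → Bool) : D.nodeFun α D.sink = 1 := by
  change ∑ᶠ p ∈ {p | D.IsPathFrom α D.sink p}, D.pathWeight D.sink p = 1
  rw [setOf_isPathFrom_sink, finsum_mem_singleton]
  rfl

lemma nodeFun_of_ne_sink (α : ℕ → Bool) {v : D.V} (hv : v ≠ D.sink) :
    D.nodeFun α v = ∑ u, D.edgeWeight v (α (D.level v)) u * D.nodeFun α u := by
  set b := α (D.level v)
  have hdisj : {u | D.edge v b u = true}.PairwiseDisjoint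
      fun u => List.cons (b, u) '' {p | D.IsPathFrom α u p} := by
    rintro u₁ - u₂ - hne
    refine Set.disjoint_left.mpr ?_
    rintro _ ⟨p, -, rfl⟩ ⟨q, -, hpq⟩
    exact hne (Prod.ext_iff.mp (List.cons_eq_cons.mp hpq).1).2.symm
  calc D.nodeFun α v
      = ∑ᶠ u ∈ {u | D.edge v b u = true}, ∑ᶠ p ∈ {p | D.IsPathFrom α u p},
          D.w v b u * D.pathWeight u p := by
        change ∑ᶠ p ∈ {p | D.IsPathFrom α v p}, D.pathWeight v p = _
        rw [D.setOf_isPathFrom_of_ne_sink α hv, finsum_mem_biUnion hdisj (Set.toFinite _)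
          fun u _ => (D.finite_setOf_isPathFrom α u).image _]
        refine finsum_mem_congr rfl fun u _ => ?_
        rw [finsum_mem_image List.cons_injective.injOn]
        rfl
    _ = ∑ u ∈ Finset.univ.filter (D.edge v b · = true), D.w v b u * D.nodeFun α u := by
        rw [finsum_mem_eq_toFinset_sum, Set.toFinset_ofPred]
        refine Finset.sum_congr rfl fun u _ => ?_
        exact (mul_finsum_mem' _ _ (D.finite_setOf_isPathFrom α u)).symm
    _ = ∑ u, D.edgeWeight v b u * D.nodeFun α u := by
        simp only [Finset.sum_filter, edgeWeight, ite_mul, zero_mul]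

lemma sum_edgeWeight_mul_eq_sum_levelEquiv (hD : D.Complete) {v : D.V} {r : ℕ}
    (hv : D.level v = r) (b : Bool) (f : D.V → K) :
    ∑ u, D.edgeWeight v b u * f u = ∑ t : Fin (D.levelCard (r + 1)),
      D.edgeWeight v b (D.levelEquiv _ t) * f (D.levelEquiv _ t) := by
  subst hv
  rw [Equiv.sum_comp (D.levelEquiv _) fun u => D.edgeWeight v b u * f u,
    ← Fintype.sum_subtype_add_sum_subtype (fun u => D.level u = D.level v + 1),
    Fintype.sum_eq_zero (fun u : {u // D.level u ≠ D.level v + 1} => _)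
      fun u => by rw [D.edgeWeight_eq_zero_of_level_ne hD b u.2, zero_mul], add_zero]

lemma nodeFun_levelEquiv (hD : D.Complete) (α : ℕ → Bool) {r : ℕ} (hr : r < n)
    (s : Fin (D.levelCard r)) :
    D.nodeFun α (D.levelEquiv r s) = ∑ t : Fin (D.levelCard (r + 1)),
      D.ttCore r s t (α r) * D.nodeFun α (D.levelEquiv (r + 1) t) := by
  have hv : D.level (D.levelEquiv r s) = r := (D.levelEquiv r s).2
  have hsink : (D.levelEquiv r s : D.V) ≠ D.sink := fun h => by
    rw [h, D.sink_level] at hv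
    omega
  rw [D.nodeFun_of_ne_sink α hsink, D.sum_edgeWeight_mul_eq_sum_levelEquiv hD hv, hv]
  simp only [ttCore_apply]

end CommSemiring

end NdEVDD

theorem ndEVDD_to_tt_general {K : Type} [CommSemiring K] (n : ℕ)
    (D : NdEVDD K n) (hD : D.Complete) :
    ∃ (χ : ℕ → ℕ) (A : ℕ → ℕ → ℕ → Bool → K)
      (node : ∀ r : Fin (n + 1), Fin (χ r.val) ≃ {v : D.V // D.level v = r.val}),
      χ 0 = 1 ∧ χ n = 1 ∧
      (∀ (r : Fin n) (s : Fin (χ r.val)) (t : Fin (χ (r.val + 1))) (b : Bool),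
        A r.val s t b =
          if D.edge (node r.castSucc s).val b (node r.succ t).val = true then
            D.w (node r.castSucc s).val b (node r.succ t).val
          else 0) ∧
      (∀ α : ℕ → Bool, ttFun n χ A α = D.eval α) := by
  refine ⟨D.levelCard, D.ttCore, fun r => D.levelEquiv r, D.levelCard_zero hD, D.levelCard_last,
    fun r s t b => D.ttCore_apply s t b, fun α => ?_⟩
  have hχ0 : 0 < D.levelCard 0 := D.levelCard_zero hD ▸ one_pos
  rw [ttFun_eq_of_backward_recursion (fun r s => D.nodeFun α (D.levelEquiv r s))
    D.levelCard_last (fun s => by rw [D.eq_sink_of_level_eq (D.levelEquiv n s).2, D.nodeFun_sink])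
    (fun r hr s => D.nodeFun_levelEquiv hD α hr s) hχ0,
    D.eq_source_of_level_eq_zero (D.levelEquiv 0 _).2]
  rfl

/-- from a complete ordered nd-EVDD to a tensor train whose bond dimensions
count the nodes at each level. -/
theorem ndEVDD_to_tt {K : Type} [CommSemiring K] (n : ℕ) (hn : 1 ≤ n)
    (D : NdEVDD K n) (hD : D.Complete) :
    ∃ (χ : ℕ → ℕ) (A : ℕ → ℕ → ℕ → Bool → K)
      (node : ∀ r : Fin (n + 1), Fin (χ r.val) ≃ {v : D.V // D.level v = r.val}),
      χ 0 = 1 ∧ χ n = 1 ∧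
      (∀ (r : Fin n) (s : Fin (χ r.val)) (t : Fin (χ (r.val + 1))) (b : Bool),
        A r.val s t b =
          if D.edge (node r.castSucc s).val b (node r.succ t).val = true then
            D.w (node r.castSucc s).val b (node r.succ t).val
          else 0) ∧
      (∀ α : ℕ → Bool, ttFun n χ A α = D.eval α) :=
  ndEVDD_to_tt_general n D hD
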